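/- Let (M₁, g₁) be a Riemannian manifold, g_r a Riemannian metric on M₁, and f : M₁ → R a smooth function attaining a minimum at a point p. Then the identity Hess_{g₁} f (X,X) = df(X)² - |df|²_{g₁} g₁(X,X) - e^{2f} g_r(X,X) cannot hold at p for all X ∈ T_pM₁ unless T_pM₁ = 0. -/

import Mathlib

/-- There is no smooth function `f` on a positive-dimensional (model space of a)
manifold, attaining its minimum at a point `p`, such that at `p` the Hessian identity
`Hess f (X,X) = df(X)² - |df|²_{g₁} g₁(X,X) - e^{2f} g_r(X,X)` holds for all tangent vectors
`X`, where `g₁`, `g_r` are positive definite bilinear forms (metrics) on the tangent space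
and `|df|²_{g₁} = g₁(df^♯, df^♯)` with `g₁(df^♯, ·) = df`. -/
theorem stmt4 {E : Type*} [NormedAddCommGroup E] [NormedSpace ℝ E] [Nontrivial E]
    (f : E → ℝ) (hf : ContDiff ℝ (⊤ : ℕ∞) f) (p : E) (hmin : ∀ x, f p ≤ f x)
    (g₁ gr : E →ₗ[ℝ] E →ₗ[ℝ] ℝ)
    (hg₁ : ∀ X : E, X ≠ 0 → 0 < g₁ X X) (hgr : ∀ X : E, X ≠ 0 → 0 < gr X X)
    (dfs : E) (hdfs : ∀ Y : E, g₁ dfs Y = fderiv ℝ f p Y)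
    (hid : ∀ X : E, iteratedFDeriv ℝ 2 f p ![X, X] =
      (fderiv ℝ f p X) ^ 2 - (g₁ dfs dfs) * g₁ X X - Real.exp (2 * f p) * gr X X) :
    False := by
  -- first derivative vanishes at the minimum
  have hloc : IsLocalMin f p := Filter.Eventually.of_forall hmin
  have hdf0 : fderiv ℝ f p = 0 := hloc.fderiv_eq_zero
  have hdfs0 : g₁ dfs dfs = 0 := by rw [hdfs dfs, hdf0]; rfl
  obtain ⟨X, hX⟩ := exists_ne (0 : E)
  -- the Hessian in direction X is negative
  set Q : ℝ := iteratedFDeriv ℝ 2 f p ![X, X] with hQdef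
  have hQ : Q < 0 := by
    have h := hid X
    rw [hdf0, hdfs0] at h
    simp only [ContinuousLinearMap.zero_apply] at h
    rw [hQdef, h]
    nlinarith [mul_pos (Real.exp_pos (2 * f p)) (hgr X hX)]
  -- the derivative along the curve t ↦ p + t • X
  set φ : ℝ → ℝ := fun t => fderiv ℝ f (p + t • X) X with hφdef
  have hfd : Differentiable ℝ f := hf.differentiable (by simp)
  have hc : ∀ t : ℝ, HasDerivAt (fun s : ℝ => p + s • X) X t := by
    intro t
    simpa using ((hasDerivAt_id t).smul_const X).const_add p
  have hg' : ∀ t : ℝ, HasDerivAt (fun s => f (p + s • X)) (φ t) t := by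
    intro t
    exact ((hfd (p + t • X)).hasFDerivAt).comp_hasDerivAt t (hc t)
  -- φ has derivative Q at 0
  have hF : ContDiff ℝ (⊤ : ℕ∞) (fderiv ℝ f) := hf.fderiv_right (by simp)
  have hφ' : HasDerivAt φ Q 0 := by
    have h1 : HasFDerivAt (fderiv ℝ f) (fderiv ℝ (fderiv ℝ f) (p + (0:ℝ) • X))
        (p + (0:ℝ) • X) := (hF.differentiable (by simp) _).hasFDerivAt
    have h2 : HasDerivAt (fun t : ℝ => fderiv ℝ f (p + t • X))
        (fderiv ℝ (fderiv ℝ f) p X) 0 := by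
      simpa [Function.comp_def] using h1.comp_hasDerivAt 0 (hc 0)
    have h3 := (ContinuousLinearMap.apply ℝ ℝ X).hasFDerivAt.comp_hasDerivAt 0 h2
    have hQ2 : Q = fderiv ℝ (fderiv ℝ f) p X X := by
      rw [hQdef, iteratedFDeriv_two_apply]; simp
    rw [hQ2]
    simpa [hφdef, ContinuousLinearMap.apply, Function.comp_def, ContinuousLinearMap.flip_apply, ContinuousLinearMap.id_apply] using h3
  have hφ0 : φ 0 = 0 := by simp [hφdef, hdf0]
  -- φ t / t is eventually negative near 0
  have hslope : Filter.Tendsto (fun t => φ t / t) (nhdsWithin 0 {(0:ℝ)}ᶜ) (nhds Q) := by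
    have h := hasDerivAt_iff_tendsto_slope.mp hφ'
    refine h.congr' ?_
    filter_upwards [self_mem_nhdsWithin] with t ht
    simp [slope_def_field, hφ0, div_eq_inv_mul]
  have hev : ∀ᶠ t in nhdsWithin 0 {(0:ℝ)}ᶜ, φ t / t < 0 :=
    hslope.eventually_lt_const hQ
  rw [eventually_nhdsWithin_iff, Metric.eventually_nhds_iff] at hev
  obtain ⟨δ, hδ, hball⟩ := hev
  set t0 : ℝ := δ / 2 with ht0def
  have ht0 : 0 < t0 := by positivity
  -- φ is negative on (0, t0)
  have hφneg : ∀ c ∈ Set.Ioo 0 t0, φ c < 0 := by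
    intro c hc'
    have hcd : dist c 0 < δ := by
      rw [Real.dist_eq, sub_zero, abs_of_pos hc'.1]
      linarith [hc'.2]
    have hcne : c ∈ ({(0:ℝ)}ᶜ : Set ℝ) := by
      simp only [Set.mem_compl_iff, Set.mem_singleton_iff]
      exact ne_of_gt hc'.1
    have hdivneg := hball hcd hcne
    have hm := mul_neg_of_neg_of_pos hdivneg hc'.1
    rwa [div_mul_cancel₀ _ (ne_of_gt hc'.1)] at hm
  -- mean value theorem on [0, t0]
  have hcont : ContinuousOn (fun s => f (p + s • X)) (Set.Icc 0 t0) :=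
    (hf.continuous.comp (by continuity)).continuousOn
  obtain ⟨c, hc', hceq⟩ := exists_hasDerivAt_eq_slope (fun s => f (p + s • X)) φ ht0
    hcont (fun x hx => hg' x)
  have hφc : φ c < 0 := hφneg c hc'
  rw [hceq] at hφc
  have hle : f p ≤ f (p + t0 • X) := hmin _
  have h0 : f (p + (0:ℝ) • X) = f p := by simp
  rw [h0] at hφc
  have : (f (p + t0 • X) - f p) / (t0 - 0) ≥ 0 := by
    apply div_nonneg (by linarith) (by linarith)
  linarith
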